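/- arXiv:2201.02376 — 9 statements merged into one kernel-verified Lean document; each statement's English description precedes it below -/
import Mathlib

section
/- For every fixed nonnegative integer n, the function m ↦ T(n,m) is a polynomial in m of degree n, where T is defined by T(n,0)=T(0,m)=1 and T(n,m) = T(n,m-1) + Σ_{k=0}^{⌊(n-1)/2⌋} T(2k,m-1)·T(n-1-2k,m). -/
/-- The Cyvin–Gutman / Kekulé number array `T(n,m)`:
`T(n,0) = T(0,m) = 1` and
`T(n,m) = T(n,m-1) + ∑_{k=0}^{⌊(n-1)/2⌋} T(2k,m-1) * T(n-1-2k,m)` for `m ≥ 1`. -/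
def T : ℕ → ℕ → ℕ
  | _, 0 => 1
  | 0, _ + 1 => 1
  | n + 1, m + 1 =>
      T (n + 1) m +
        ∑ k ∈ Finset.range (n / 2 + 1), T (2 * k) m * T (n - 2 * k) (m + 1)
  termination_by n m => (m, n)
  decreasing_by all_goals simp_wf <;> omega

open Polynomial

/-- Discrete antiderivative of a polynomial, with degree and leading-coefficient control. -/
lemma antideriv : ∀ n : ℕ, ∀ q : ℚ[X], q.natDegree ≤ n →
    ∃ P : ℚ[X], P.natDegree ≤ n + 1 ∧ P.coeff (n + 1) = q.coeff n / (n + 1) ∧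
      ∀ x : ℚ, P.eval (x + 1) = P.eval x + q.eval x := by
  intro n
  induction n with
  | zero =>
    intro q hq
    obtain ⟨a, rfl⟩ : ∃ a, q = C a := ⟨q.coeff 0, eq_C_of_natDegree_le_zero hq⟩
    refine ⟨C a * X, ?_, ?_, ?_⟩
    · exact natDegree_C_mul_le a X |>.trans (by simp)
    · simp
    · intro x; simp; ring
  | succ n ih =>
    intro q hq
    set c : ℚ := q.coeff (n + 1) / (n + 2) with hc
    set d : ℚ[X] := C c * ((X + 1) ^ (n + 2) - X ^ (n + 2)) with hd
    have hdcoeff : ∀ N : ℕ, d.coeff N =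
        c * (((n + 2).choose N : ℚ) - if N = n + 2 then 1 else 0) := by
      intro N
      simp [hd, coeff_X_add_one_pow, coeff_X_pow, mul_sub]
    have hdn : d.natDegree ≤ n + 1 := by
      rw [natDegree_le_iff_coeff_eq_zero]
      intro N hN
      rw [hdcoeff]
      rcases eq_or_lt_of_le (Nat.succ_le_of_lt hN) with h | h
      · simp [← h]
      · rw [Nat.choose_eq_zero_of_lt h, if_neg (by omega)]; ring
    have hdlead : d.coeff (n + 1) = q.coeff (n + 1) := by
      have h2 : ((n : ℚ) + 2) ≠ 0 := by positivity
      rw [hdcoeff, if_neg (by omega), Nat.choose_succ_self_right]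
      push_cast
      rw [hc, sub_zero]
      have h3 : (↑n + 1 + 1 : ℚ) = ↑n + 2 := by ring
      rw [h3, div_mul_cancel₀ _ h2]
    set r : ℚ[X] := q - d with hr
    have hrn : r.natDegree ≤ n := by
      rw [natDegree_le_iff_coeff_eq_zero]
      intro N hN
      rcases eq_or_lt_of_le (Nat.succ_le_of_lt hN) with h | h
      · simp [hr, ← h, hdlead]
      · rw [hr, coeff_sub, coeff_eq_zero_of_natDegree_lt (lt_of_le_of_lt hq h),
          coeff_eq_zero_of_natDegree_lt (lt_of_le_of_lt hdn h), sub_zero]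
    obtain ⟨P', h1, h2, h3⟩ := ih r hrn
    refine ⟨C c * X ^ (n + 2) + P', ?_, ?_, ?_⟩
    · refine natDegree_add_le_of_degree_le ?_ (h1.trans (by omega))
      exact (natDegree_C_mul_le _ _).trans (by simp)
    · rw [coeff_add, coeff_C_mul, coeff_X_pow, if_pos rfl,
        coeff_eq_zero_of_natDegree_lt (lt_of_le_of_lt h1 (by omega))]
      push_cast
      rw [hc]; ring
    · intro x
      have hrx : r.eval x = q.eval x - c * ((x + 1) ^ (n + 2) - x ^ (n + 2)) := by
        simp [hr, hd]
      have := h3 x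
      simp only [eval_add, eval_mul, eval_C, eval_pow, eval_X] at *
      rw [this, hrx]; ring

lemma T_poly : ∀ n : ℕ, ∃ p : ℚ[X], p.natDegree = n ∧ 0 < p.coeff n ∧
    ∀ m : ℕ, (T n m : ℚ) = p.eval (m : ℚ) := by
  intro n
  induction n using Nat.strong_induction_on with
  | _ n IH =>
  match n with
  | 0 =>
    refine ⟨C 1, by simp, by simp, fun m => ?_⟩
    cases m <;> simp [T]
  | j + 1 =>
    -- get a total function of polynomials for indices < j + 1
    have hex : ∀ i : ℕ, ∃ p : ℚ[X], i < j + 1 →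
        p.natDegree = i ∧ 0 < p.coeff i ∧ ∀ m : ℕ, (T i m : ℚ) = p.eval (m : ℚ) := by
      intro i
      by_cases h : i < j + 1
      · obtain ⟨p, hp⟩ := IH i h
        exact ⟨p, fun _ => hp⟩
      · exact ⟨0, fun h' => absurd h' h⟩
    choose f hf using hex
    set q : ℚ[X] := ∑ k ∈ Finset.range (j / 2 + 1),
      f (2 * k) * (f (j - 2 * k)).comp (X + 1) with hq
    have hterm : ∀ k ∈ Finset.range (j / 2 + 1),
        (f (2 * k) * (f (j - 2 * k)).comp (X + 1)).natDegree = j ∧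
        0 < (f (2 * k) * (f (j - 2 * k)).comp (X + 1)).coeff j := by
      intro k hk
      rw [Finset.mem_range] at hk
      have hk2 : 2 * k < j + 1 := by omega
      have hk3 : j - 2 * k < j + 1 := by omega
      obtain ⟨ha1, ha2, -⟩ := hf (2 * k) hk2
      obtain ⟨hb1, hb2, -⟩ := hf (j - 2 * k) hk3
      have hane : f (2 * k) ≠ 0 := fun h => by simp [h] at ha2
      have hbne : f (j - 2 * k) ≠ 0 := fun h => by simp [h] at hb2
      have hX1 : (X + 1 : ℚ[X]) = X + C 1 := by simp
      have hcompdeg : ((f (j - 2 * k)).comp (X + 1)).natDegree = j - 2 * k := by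
        rw [natDegree_comp, hX1, natDegree_X_add_C, mul_one, hb1]
      have hcomplead : ((f (j - 2 * k)).comp (X + 1)).leadingCoeff =
          (f (j - 2 * k)).leadingCoeff := by
        rw [leadingCoeff_comp (by rw [hX1, natDegree_X_add_C]; omega), hX1,
          leadingCoeff_X_add_C, one_pow, mul_one]
      have hcompne : (f (j - 2 * k)).comp (X + 1) ≠ 0 := by
        intro h
        rw [← leadingCoeff_ne_zero] at hbne
        rw [h, leadingCoeff_zero] at hcomplead
        exact hbne hcomplead.symm
      have hdeg : (f (2 * k) * (f (j - 2 * k)).comp (X + 1)).natDegree = j := by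
        rw [natDegree_mul hane hcompne, ha1, hcompdeg]; omega
      refine ⟨hdeg, ?_⟩
      have : (f (2 * k) * (f (j - 2 * k)).comp (X + 1)).coeff j =
          (f (2 * k)).leadingCoeff * (f (j - 2 * k)).leadingCoeff := by
        have h := coeff_natDegree (p := f (2 * k) * (f (j - 2 * k)).comp (X + 1))
        rw [hdeg] at h
        rw [h, leadingCoeff_mul, hcomplead]
      rw [this]
      have hla : 0 < (f (2 * k)).leadingCoeff := by rwa [← coeff_natDegree, ha1]
      have hlb : 0 < (f (j - 2 * k)).leadingCoeff := by rwa [← coeff_natDegree, hb1]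
      exact mul_pos hla hlb
    have hqdeg : q.natDegree ≤ j := by
      rw [hq]
      exact natDegree_sum_le_of_forall_le _ _ fun k hk => le_of_eq (hterm k hk).1
    have hqcoeff : 0 < q.coeff j := by
      rw [hq, finset_sum_coeff]
      exact Finset.sum_pos (fun k hk => (hterm k hk).2) ⟨0, Finset.mem_range.mpr (by omega)⟩
    obtain ⟨P, hP1, hP2, hP3⟩ := antideriv j q hqdeg
    set p : ℚ[X] := P + C (1 - P.eval 0) with hp
    have hpc : 0 < p.coeff (j + 1) := by
      rw [hp, coeff_add, coeff_C, if_neg (by omega), add_zero, hP2]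
      positivity
    have hpd : p.natDegree = j + 1 := by
      refine le_antisymm ?_ (le_natDegree_of_ne_zero (ne_of_gt hpc))
      exact natDegree_add_le_of_degree_le hP1 (by simp)
    refine ⟨p, hpd, hpc, ?_⟩
    intro m
    induction m with
    | zero => simp [T, hp]
    | succ m ihm =>
      have hrec : (T (j + 1) (m + 1) : ℚ) = T (j + 1) m +
          ∑ k ∈ Finset.range (j / 2 + 1), (T (2 * k) m : ℚ) * T (j - 2 * k) (m + 1) := by
        rw [T]
        push_cast
        ring
      have hsum : ∑ k ∈ Finset.range (j / 2 + 1),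
          (T (2 * k) m : ℚ) * T (j - 2 * k) (m + 1) = q.eval (m : ℚ) := by
        rw [hq, eval_finset_sum]
        refine Finset.sum_congr rfl fun k hk => ?_
        rw [Finset.mem_range] at hk
        obtain ⟨-, -, ha3⟩ := hf (2 * k) (by omega)
        obtain ⟨-, -, hb3⟩ := hf (j - 2 * k) (by omega)
        have hb3' := hb3 (m + 1)
        push_cast at hb3'
        rw [eval_mul, eval_comp, eval_add, eval_X, eval_one, ← ha3, ← hb3']
      have hpev : p.eval ((m : ℚ) + 1) = p.eval (m : ℚ) + q.eval (m : ℚ) := by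
        rw [hp]
        simp only [eval_add, eval_C]
        rw [hP3]; ring
      rw [hrec, hsum, ihm]
      push_cast
      rw [hpev]

/-- For every fixed `n`, the function `m ↦ T(n,m)` is a polynomial in `m` of degree `n`. -/
theorem T_is_polynomial_of_degree (n : ℕ) :
    ∃ p : Polynomial ℚ, p.degree = n ∧ ∀ m : ℕ, (T n m : ℚ) = p.eval (m : ℚ) := by
  obtain ⟨p, h1, h2, h3⟩ := T_poly n
  refine ⟨p, ?_, h3⟩
  have hne : p ≠ 0 := fun h => by simp [h] at h2
  rw [degree_eq_natDegree hne, h1]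
end

section
/- For positive integers m, n, k with 1 ≤ k ≤ n−2, one has Ā_m^k A_m^{n−k} − Ā_m^{k+2} A_m^{n−k−2} = Ā_m^{k+1} v_{m,1} u_m^T A_m^{n−k−2}, where A_m is the m×m unit-primitive matrix with entries a_{ij} = [i+j ≤ m+1], X_m is the m×m anti-identity matrix (1's on the antidiagonal), Ā_m = A_m − X_m, u_m is the all-ones column vector, and v_{m,1} is the first standard unit column vector. -/
open Matrix

/-- The `m × m` unit-primitive matrix: entry `(i,j)` (1-based) is 1 iff `i + j ≤ m + 1`. -/
def A (m : ℕ) : Matrix (Fin m) (Fin m) ℝ :=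
  Matrix.of fun i j => if (i : ℕ) + (j : ℕ) + 1 ≤ m then 1 else 0

/-- The `m × m` anti-identity matrix: entry `(i,j)` (1-based) is 1 iff `i + j = m + 1`. -/
def X (m : ℕ) : Matrix (Fin m) (Fin m) ℝ :=
  Matrix.of fun i j => if (i : ℕ) + (j : ℕ) + 1 = m then 1 else 0

/-- `Ā_m = A_m - X_m`. -/
def Abar (m : ℕ) : Matrix (Fin m) (Fin m) ℝ := A m - X m

/-- The rank-one matrix `v_{m,1} u_m^T`: entry `(i,j)` is 1 iff `i = 1` (1-based). -/
def VU (m : ℕ) : Matrix (Fin m) (Fin m) ℝ :=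
  Matrix.of fun i _ => if (i : ℕ) = 0 then 1 else 0

/-! Since `A = Ā + X` and `X` is the reversal permutation, `A² - Ā² = ĀX + XĀ + X²` is the
all-ones matrix `J`. The first column of `Ā` is `1` exactly in the rows where some entry of `Ā`
can be nonzero, so `ĀJ = Ā² v_{m,1} u_mᵀ`. Thus `Ā (A² - Ā²) = Ā² v_{m,1} u_mᵀ`, and the theorem
is this identity multiplied by `Ā^{k-1}` on the left and `A^{n-k-2}` on the right. -/

lemma pow_succ_mul_pow_add_two_sub {R : Type*} [Ring R] {a b c : R}
    (h : a * (b ^ 2 - a ^ 2) = a ^ 2 * c) (k s : ℕ) :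
    a ^ (k + 1) * b ^ (s + 2) - a ^ (k + 3) * b ^ s = a ^ (k + 2) * c * b ^ s :=
  calc a ^ (k + 1) * b ^ (s + 2) - a ^ (k + 3) * b ^ s
      = a ^ k * (a * (b ^ 2 - a ^ 2)) * b ^ s := by
        rw [add_comm s, pow_add b 2, pow_succ, pow_add _ k 3]; noncomm_ring
    _ = a ^ (k + 2) * c * b ^ s := by rw [h, ← mul_assoc, ← pow_add]

lemma Abar_apply (m : ℕ) (i j : Fin m) :
    Abar m i j = if (i : ℕ) + (j : ℕ) + 2 ≤ m then 1 else 0 := by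
  simp only [Abar, A, X, Matrix.sub_apply, of_apply]
  split_ifs <;> norm_num <;> omega

lemma X_apply (m : ℕ) (i j : Fin m) : X m i j = if i = j.rev then 1 else 0 := by
  simp only [X, of_apply, Fin.ext_iff, Fin.val_rev]
  have := i.isLt; have := j.isLt
  split_ifs <;> first | rfl | omega

lemma mul_X_apply (m : ℕ) (M : Matrix (Fin m) (Fin m) ℝ) (i j : Fin m) :
    (M * X m) i j = M i j.rev := by
  simp [mul_apply, X_apply]

lemma X_mul_apply (m : ℕ) (M : Matrix (Fin m) (Fin m) ℝ) (i j : Fin m) :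
    (X m * M) i j = M i.rev j := by
  simp [mul_apply, X_apply, ← Fin.rev_eq_iff]

lemma A_sq_sub_Abar_sq (m : ℕ) : A m ^ 2 - Abar m ^ 2 = of fun _ _ => 1 := by
  have hA : A m = Abar m + X m := by simp [Abar]
  have : A m ^ 2 - Abar m ^ 2 = Abar m * X m + X m * Abar m + X m * X m := by
    rw [hA]; noncomm_ring
  rw [this]
  ext i j
  simp only [Matrix.add_apply, mul_X_apply, X_mul_apply, X_apply, Abar_apply, Fin.rev_rev,
    of_apply, Fin.ext_iff, Fin.val_rev]
  have := i.isLt; have := j.isLt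
  split_ifs <;> norm_num <;> omega

lemma mul_VU_apply (m : ℕ) (M : Matrix (Fin (m + 1)) (Fin (m + 1)) ℝ) (i j : Fin (m + 1)) :
    (M * VU (m + 1)) i j = M i 0 := by
  simp [mul_apply, VU]

lemma Abar_mul_VU_apply (m : ℕ) (i j : Fin m) :
    (Abar m * VU m) i j = if (i : ℕ) + 2 ≤ m then 1 else 0 := by
  cases m with
  | zero => exact i.elim0
  | succ m => rw [mul_VU_apply, Abar_apply, Fin.val_zero, add_zero]

lemma Abar_mul_ones (m : ℕ) : Abar m * of (fun _ _ => 1) = Abar m ^ 2 * VU m := by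
  ext i j
  rw [sq, mul_assoc, mul_apply, mul_apply]
  refine Finset.sum_congr rfl fun l _ => ?_
  rw [Abar_mul_VU_apply, Abar_apply, of_apply]
  split_ifs <;> first | omega | simp

lemma Abar_mul_A_sq_sub_Abar_sq (m : ℕ) :
    Abar m * (A m ^ 2 - Abar m ^ 2) = Abar m ^ 2 * VU m := by
  rw [A_sq_sub_Abar_sq, Abar_mul_ones]

theorem Abar_pow_mul_A_pow_sub_general (m n k : ℕ) (hk : 1 ≤ k) (hkn : k ≤ n - 2) :
    Abar m ^ k * A m ^ (n - k) - Abar m ^ (k + 2) * A m ^ (n - k - 2) =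
      Abar m ^ (k + 1) * VU m * A m ^ (n - k - 2) := by
  obtain ⟨j, rfl⟩ : ∃ j, k = j + 1 := ⟨k - 1, by omega⟩
  obtain ⟨s, hs⟩ : ∃ s, n - (j + 1) = s + 2 := ⟨n - (j + 1) - 2, by omega⟩
  rw [hs, Nat.add_sub_cancel]
  exact pow_succ_mul_pow_add_two_sub (Abar_mul_A_sq_sub_Abar_sq m) j s

/-- For positive integers `m, n, k` with `1 ≤ k ≤ n - 2`:
`Ā_m^k A_m^{n-k} - Ā_m^{k+2} A_m^{n-k-2} = Ā_m^{k+1} v_{m,1} u_m^T A_m^{n-k-2}`. -/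
theorem Abar_pow_mul_A_pow_sub (m n k : ℕ) (hm : 0 < m) (hn : 0 < n) (hk : 1 ≤ k) (hkn : k ≤ n - 2) :
    Abar m ^ k * A m ^ (n - k) - Abar m ^ (k + 2) * A m ^ (n - k - 2) =
      Abar m ^ (k + 1) * VU m * A m ^ (n - k - 2) :=
  Abar_pow_mul_A_pow_sub_general m n k hk hkn
end

section
/- For all nonnegative integers n and m, T(n,m) = u_{m+1}^T A_{m+1}^n v_{m+1,1}, where T is defined by the recursion T(n,0)=T(0,m)=1 and T(n,m)=T(n,m-1)+Σ_{k=0}^{⌊(n-1)/2⌋} T(2k,m-1)T(n-1-2k,m), and A_{m+1} is the (m+1)×(m+1) unit-primitive matrix. -/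
open Matrix

/-- The all-ones vector `u_m`. -/
def uvec (m : ℕ) : Fin m → ℝ := fun _ => 1

/-- The first standard basis vector `v_{m,1}`. -/
def v1 (m : ℕ) : Fin m → ℝ := fun i => if (i : ℕ) = 0 then 1 else 0

/-! ### auxiliary lemmas -/

lemma fin_val_zero_iff {k : ℕ} (x : Fin (k+1)) : ((x:ℕ) = 0) ↔ x = 0 :=
  ⟨fun h => Fin.ext (by simp [h]), fun h => by simp [h]⟩

lemma A_symm (m : ℕ) : (A m)ᵀ = A m := by
  ext i j; simp only [A, transpose_apply, of_apply]
  rw [Nat.add_comm (j:ℕ) (i:ℕ)]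

lemma A_mulVec_v1 (m : ℕ) : A (m+1) *ᵥ v1 (m+1) = uvec (m+1) := by
  ext i
  simp only [mulVec, dotProduct, v1, uvec, mul_ite, mul_one, mul_zero,
    fin_val_zero_iff]
  rw [Finset.sum_ite_eq' Finset.univ (0 : Fin (m+1)) (fun j => A (m+1) i j)]
  simp only [Finset.mem_univ, if_true, A, of_apply, Fin.val_zero]
  have : (i:ℕ) + 0 + 1 ≤ m + 1 := by omega
  simp [this]

lemma v1_dot (m : ℕ) (y : Fin (m+1) → ℝ) : v1 (m+1) ⬝ᵥ y = y 0 := by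
  simp only [dotProduct, v1, ite_mul, one_mul, zero_mul, fin_val_zero_iff]
  rw [Finset.sum_ite_eq' Finset.univ (0 : Fin (m+1)) y]
  simp

lemma symm_dot {m : ℕ} (M : Matrix (Fin m) (Fin m) ℝ) (h : Mᵀ = M)
    (a b : Fin m → ℝ) : a ⬝ᵥ (M *ᵥ b) = b ⬝ᵥ (M *ᵥ a) := by
  rw [dotProduct_mulVec, dotProduct_comm, ← mulVec_transpose, h]

lemma pow_symm {m : ℕ} (M : Matrix (Fin m) (Fin m) ℝ) (h : Mᵀ = M) (k : ℕ) :
    (M ^ k)ᵀ = M ^ k := by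
  rw [transpose_pow, h]

lemma A_sq (m : ℕ) (i j : Fin m) :
    (A m * A m) i j = ((m - max (i:ℕ) (j:ℕ) : ℕ) : ℝ) := by
  have hij : (i:ℕ) < m := i.isLt
  have hj : (j:ℕ) < m := j.isLt
  obtain ⟨M, hMeq, hMi, hMj, hMor⟩ : ∃ M, max (i:ℕ) (j:ℕ) = M ∧ (i:ℕ) ≤ M ∧ (j:ℕ) ≤ M ∧
      (M = (i:ℕ) ∨ M = (j:ℕ)) :=
    ⟨_, rfl, le_max_left _ _, le_max_right _ _, max_choice _ _⟩
  rw [hMeq]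
  simp only [Matrix.mul_apply, A, of_apply, ite_mul, one_mul, zero_mul,
    mul_ite, mul_one, mul_zero]
  have h1 : ∀ x : Fin m,
      (if (x:ℕ) + (j:ℕ) + 1 ≤ m then (if (i:ℕ) + (x:ℕ) + 1 ≤ m then (1:ℝ) else 0) else 0)
      = (if (x:ℕ) < m - M then (1:ℝ) else 0) := by
    intro x
    have hx : (x:ℕ) < m := x.isLt
    rcases hMor with h'|h' <;> split_ifs <;> first | rfl | (exfalso; omega)
  rw [show (∑ x : Fin m, if (x:ℕ) + (j:ℕ) + 1 ≤ m then (if (i:ℕ) + (x:ℕ) + 1 ≤ m then (1:ℝ) else 0) else 0) = ∑ x : Fin m, (if (x:ℕ) < m - M then (1:ℝ) else 0) from Finset.sum_congr rfl (fun x _ => h1 x)]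
  rw [Fin.sum_univ_eq_sum_range (fun x => if x < m - M then (1:ℝ) else 0) m]
  rw [← Finset.sum_filter]
  have h2 : ((Finset.range m).filter (fun x => x < m - M)) = Finset.range (m - M) := by
    ext x; simp only [Finset.mem_filter, Finset.mem_range]; omega
  rw [h2]
  simp

def Jm (m : ℕ) : Matrix (Fin m) (Fin m) ℝ := Matrix.of fun _ _ => 1

def S (m : ℕ) : Matrix (Fin (m+2)) (Fin (m+2)) ℝ :=
  Matrix.of fun i j =>
    if (i:ℕ) ≤ m ∧ (j:ℕ) ≤ m then ((m+1 - max (i:ℕ) (j:ℕ) : ℕ) : ℝ) else 0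

lemma Bsq (m : ℕ) : A (m+2) * A (m+2) = Jm (m+2) + S m := by
  ext i j
  rw [A_sq]
  simp only [Jm, S, Matrix.add_apply, of_apply]
  have hi : (i:ℕ) < m + 2 := i.isLt
  have hj : (j:ℕ) < m + 2 := j.isLt
  obtain ⟨M, hMeq, hMi, hMj, hMor⟩ : ∃ M, max (i:ℕ) (j:ℕ) = M ∧ (i:ℕ) ≤ M ∧ (j:ℕ) ≤ M ∧
      (M = (i:ℕ) ∨ M = (j:ℕ)) :=
    ⟨_, rfl, le_max_left _ _, le_max_right _ _, max_choice _ _⟩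
  rw [hMeq]
  by_cases h : (i:ℕ) ≤ m ∧ (j:ℕ) ≤ m
  · rw [if_pos h]
    have h1 : (m + 2 - M : ℕ) = 1 + (m + 1 - M : ℕ) := by rcases hMor with h'|h' <;> omega
    rw [h1]
    push_cast
    ring
  · rw [if_neg h]
    have h1 : (m + 2 - M : ℕ) = 1 := by rcases hMor with h'|h' <;> omega
    rw [h1]
    norm_num

lemma S_mulVec (m : ℕ) (w : Fin (m+2) → ℝ) :
    S m *ᵥ w = Fin.snoc ((A (m+1) * A (m+1)) *ᵥ (w ∘ Fin.castSucc)) 0 := by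
  ext i
  refine Fin.lastCases ?_ (fun i => ?_) i
  · rw [Fin.snoc_last]
    simp only [mulVec, dotProduct, S, of_apply, Fin.val_last]
    have : ∀ j : Fin (m+2), (if (m+1:ℕ) ≤ m ∧ (j:ℕ) ≤ m then ((m+1 - max (m+1) (j:ℕ) : ℕ):ℝ) else 0) * w j = 0 := by
      intro j
      rw [if_neg (by omega)]
      ring
    rw [Finset.sum_congr rfl (fun j _ => this j), Finset.sum_const, smul_zero]
  · rw [Fin.snoc_castSucc]
    simp only [mulVec, dotProduct, Function.comp]
    rw [Fin.sum_univ_castSucc (fun j => S m (Fin.castSucc i) j * w j)]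
    have hlast : S m (Fin.castSucc i) (Fin.last (m+1)) * w (Fin.last (m+1)) = 0 := by
      simp only [S, of_apply, Fin.val_last]
      rw [if_neg (by omega)]
      ring
    rw [hlast, add_zero]
    refine Finset.sum_congr rfl (fun j _ => ?_)
    congr 1
    rw [A_sq]
    simp only [S, of_apply, Fin.coe_castSucc]
    rw [if_pos ⟨by omega, by omega⟩]

lemma S_pow_mulVec (m k : ℕ) (w : Fin (m+2) → ℝ) :
    (S m)^(k+1) *ᵥ w = Fin.snoc (((A (m+1) * A (m+1))^(k+1)) *ᵥ (w ∘ Fin.castSucc)) 0 := by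
  induction k with
  | zero => simpa using S_mulVec m w
  | succ k ih =>
    rw [pow_succ', ← Matrix.mulVec_mulVec, ih, S_mulVec]
    have h1 : (Fin.snoc (((A (m+1) * A (m+1))^(k+1)) *ᵥ (w ∘ Fin.castSucc)) (0:ℝ)) ∘ Fin.castSucc
        = ((A (m+1) * A (m+1))^(k+1)) *ᵥ (w ∘ Fin.castSucc) := by
      funext j
      simp [Fin.snoc_castSucc]
    rw [h1, Matrix.mulVec_mulVec, ← pow_succ']

lemma expansion (m q : ℕ) :
    (A (m+2))^(2*q) = (S m)^q +
      ∑ k ∈ Finset.range q, (S m)^k * Jm (m+2) * (A (m+2))^(2*(q-1-k)) := by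
  induction q with
  | zero => simp
  | succ q ih =>
    have h2 : (A (m+2))^(2*(q+1)) = (A (m+2) * A (m+2)) * (A (m+2))^(2*q) := by
      rw [← pow_two, ← pow_add]
      congr 1
      ring
    rw [h2, Bsq, add_mul]
    nth_rewrite 2 [ih]
    rw [mul_add, Finset.mul_sum, Finset.sum_range_succ']
    have hfk : ∀ k, S m * ((S m)^k * Jm (m+2) * (A (m+2))^(2*(q-1-k)))
        = (S m)^(k+1) * Jm (m+2) * (A (m+2))^(2*(q+1-1-(k+1))) := by
      intro k
      have h3 : q+1-1-(k+1) = q-1-k := by omega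
      rw [h3, pow_succ', ← mul_assoc, ← mul_assoc]
    rw [Finset.sum_congr rfl (fun k _ => hfk k)]
    have h0 : (S m)^0 * Jm (m+2) * (A (m+2))^(2*(q+1-1-0)) = Jm (m+2) * (A (m+2))^(2*q) := by
      rw [pow_zero, one_mul]
      norm_num
    rw [h0, ← pow_succ']
    abel

/-- abbreviation for the RHS quantity -/
noncomputable def tm (n m : ℕ) : ℝ := uvec (m+1) ⬝ᵥ (A (m+1) ^ n).mulVec (v1 (m+1))

lemma uvec_eq (m : ℕ) : uvec (m+1) = A (m+1) *ᵥ v1 (m+1) := (A_mulVec_v1 m).symm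

lemma dotA (n m : ℕ) (w : Fin (m+1) → ℝ) :
    uvec (m+1) ⬝ᵥ ((A (m+1))^n *ᵥ w) = v1 (m+1) ⬝ᵥ ((A (m+1))^(n+1) *ᵥ w) := by
  rw [uvec_eq, dotProduct_comm, symm_dot _ (A_symm (m+1)), Matrix.mulVec_mulVec, ← pow_succ']

lemma tm_eq (n m : ℕ) : tm n m = v1 (m+1) ⬝ᵥ ((A (m+1))^(n+1) *ᵥ v1 (m+1)) :=
  dotA n m (v1 (m+1))

lemma Jm_mulVec (k : ℕ) (y : Fin k → ℝ) :
    Jm k *ᵥ y = (uvec k ⬝ᵥ y) • uvec k := by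
  ext i
  simp [Jm, mulVec, dotProduct, uvec]

lemma v1_dot_uvec (m : ℕ) : v1 (m+1) ⬝ᵥ uvec (m+1) = 1 := by
  rw [v1_dot]; rfl

lemma uvec_comp (m : ℕ) : (uvec (m+2)) ∘ (Fin.castSucc : Fin (m+1) → Fin (m+2)) = uvec (m+1) := rfl

lemma v1_comp (m : ℕ) : (v1 (m+2)) ∘ (Fin.castSucc : Fin (m+1) → Fin (m+2)) = v1 (m+1) := by
  funext j
  simp [v1, Function.comp]

lemma snoc_at_zero (m : ℕ) (x : Fin (m+1) → ℝ) :
    (Fin.snoc x (0:ℝ) : Fin (m+2) → ℝ) 0 = x 0 := by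
  have : (0 : Fin (m+2)) = Fin.castSucc (0 : Fin (m+1)) := rfl
  rw [this, Fin.snoc_castSucc]

lemma tm_S_uvec (m k : ℕ) :
    v1 (m+2) ⬝ᵥ ((S m)^k *ᵥ uvec (m+2)) = tm (2*k) m := by
  cases k with
  | zero =>
    rw [pow_zero, Matrix.one_mulVec, v1_dot_uvec]
    show (1:ℝ) = tm 0 m
    rw [tm_eq, pow_one, A_mulVec_v1, v1_dot_uvec]
  | succ k =>
    rw [S_pow_mulVec, v1_dot, snoc_at_zero, uvec_comp]
    rw [← v1_dot m (((A (m+1) * A (m+1))^(k+1)) *ᵥ uvec (m+1))]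
    rw [← pow_two, ← pow_mul]
    rw [symm_dot _ (pow_symm _ (A_symm (m+1)) _)]
    rfl

lemma tm_S_v1 (m q : ℕ) :
    v1 (m+2) ⬝ᵥ ((S m)^(q+1) *ᵥ v1 (m+2)) = tm (2*q+1) m := by
  rw [S_pow_mulVec, v1_dot, snoc_at_zero, v1_comp]
  rw [← v1_dot m (((A (m+1) * A (m+1))^(q+1)) *ᵥ v1 (m+1))]
  rw [← pow_two, ← pow_mul]
  rw [tm_eq, show 2*q+1+1 = 2*(q+1) from by omega]

lemma tm_B_uvec (m r : ℕ) :
    uvec (m+2) ⬝ᵥ ((A (m+2))^(2*r) *ᵥ uvec (m+2)) = tm (2*r+1) (m+1) := by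
  show _ = uvec (m+2) ⬝ᵥ ((A (m+2))^(2*r+1) *ᵥ v1 (m+2))
  rw [pow_succ, ← Matrix.mulVec_mulVec, A_mulVec_v1]

lemma middle_term (m k r : ℕ) (w : Fin (m+2) → ℝ) :
    v1 (m+2) ⬝ᵥ (((S m)^k * Jm (m+2) * (A (m+2))^(2*r)) *ᵥ w)
      = tm (2*k) m * (uvec (m+2) ⬝ᵥ ((A (m+2))^(2*r) *ᵥ w)) := by
  rw [← Matrix.mulVec_mulVec, ← Matrix.mulVec_mulVec, Jm_mulVec, Matrix.mulVec_smul,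
    dotProduct_smul, tm_S_uvec]
  simp [mul_comm]

lemma dot_sum_mulVec {m : ℕ} (s : Finset ℕ) (F : ℕ → Matrix (Fin m) (Fin m) ℝ)
    (a w : Fin m → ℝ) :
    a ⬝ᵥ ((∑ k ∈ s, F k) *ᵥ w) = ∑ k ∈ s, a ⬝ᵥ (F k *ᵥ w) := by
  induction s using Finset.cons_induction with
  | empty => simp [Matrix.zero_mulVec]
  | cons k s hk ih => simp only [Finset.sum_cons, Matrix.add_mulVec, dotProduct_add, ih]

lemma key_recursion (n m : ℕ) :
    tm (n+1) (m+1) = tm (n+1) m +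
      ∑ k ∈ Finset.range (n/2 + 1), tm (2*k) m * tm (n - 2*k) (m+1) := by
  rcases Nat.even_or_odd n with ⟨p, hp⟩ | ⟨p, hp⟩
  · -- n = 2p
    have hp2 : n / 2 = p := by omega
    rw [tm_eq, show n+1+1 = 2*(p+1) from by omega, expansion m (p+1),
      Matrix.add_mulVec, dotProduct_add, dot_sum_mulVec]
    have h1 : v1 (m+1+1) ⬝ᵥ ((S m)^(p+1) *ᵥ v1 (m+1+1)) = tm (n+1) m := by
      rw [tm_S_v1, show 2*p+1 = n+1 from by omega]
    rw [h1, hp2]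
    congr 1
    refine Finset.sum_congr rfl (fun k hk => ?_)
    rw [Finset.mem_range] at hk
    rw [middle_term]
    have h2 : uvec (m+2) ⬝ᵥ ((A (m+2))^(2*(p+1-1-k)) *ᵥ v1 (m+2)) = tm (n-2*k) (m+1) := by
      rw [show 2*(p+1-1-k) = n - 2*k from by omega]
      rfl
    rw [h2]
  · -- n = 2p+1
    have hp2 : n / 2 = p := by omega
    rw [tm_eq, show n+1+1 = 2*(p+1)+1 from by omega, pow_succ,
      ← Matrix.mulVec_mulVec, A_mulVec_v1 (m+1), expansion m (p+1),
      Matrix.add_mulVec, dotProduct_add, dot_sum_mulVec]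
    have h1 : v1 (m+1+1) ⬝ᵥ ((S m)^(p+1) *ᵥ uvec (m+1+1)) = tm (n+1) m := by
      rw [tm_S_uvec, show 2*(p+1) = n+1 from by omega]
    rw [h1, hp2]
    congr 1
    refine Finset.sum_congr rfl (fun k hk => ?_)
    rw [Finset.mem_range] at hk
    rw [middle_term, tm_B_uvec]
    rw [show 2*(p+1-1-k)+1 = n - 2*k from by omega]

lemma one_dot_v1 (m : ℕ) : uvec (m+1) ⬝ᵥ v1 (m+1) = 1 := by
  rw [dotProduct_comm, v1_dot_uvec]

lemma main_aux (m : ℕ) : ∀ n, (T n m : ℝ) = tm n m := by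
  induction m with
  | zero =>
    intro n
    have hA : A 1 = 1 := by
      ext i j
      fin_cases i
      fin_cases j
      simp [A, Matrix.one_apply]
    have hT : T n 0 = 1 := by rw [T]
    rw [hT]
    have : tm n 0 = 1 := by
      rw [tm, hA, one_pow, Matrix.one_mulVec, one_dot_v1]
    rw [this]
    norm_num
  | succ m ih =>
    intro n
    induction n using Nat.strong_induction_on with
    | _ n ihn =>
      match n with
      | 0 =>
        have hT : T 0 (m+1) = 1 := by rw [T]
        have : tm 0 (m+1) = 1 := by
          rw [tm, pow_zero, Matrix.one_mulVec, one_dot_v1]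
        rw [hT, this]
        norm_num
      | Nat.succ n =>
        rw [T]
        push_cast
        rw [ih (n+1)]
        have hsum : ∑ k ∈ Finset.range (n / 2 + 1), (T (2*k) m : ℝ) * (T (n - 2*k) (m+1) : ℝ)
            = ∑ k ∈ Finset.range (n / 2 + 1), tm (2*k) m * tm (n - 2*k) (m+1) :=
          Finset.sum_congr rfl (fun k hk => by rw [ih (2*k), ihn (n - 2*k) (by omega)])
        rw [hsum]
        exact (key_recursion n m).symm

/-- For all `n, m ≥ 0`: `T(n,m) = u_{m+1}^T A_{m+1}^n v_{m+1,1}`. -/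
theorem T_eq_Tbar (n m : ℕ) :
    (T n m : ℝ) = uvec (m + 1) ⬝ᵥ (A (m + 1) ^ n).mulVec (v1 (m + 1)) := by
  exact main_aux m n
end

section
/- For positive integers m, n, k, A_m^{n−k} X_m Ā_m^k + A_m^{n−k−1} X_m Ā_m^{k+1} = A_m^{n−k} v_{m,1} u_m^T Ā_m^k, where A_m is the m×m unit-primitive matrix, X_m is the anti-identity matrix, and Ā_m = A_m − X_m. -/
open Matrix

lemma AX_apply (m : ℕ) (i j : Fin m) :
    (A m * X m) i j = if (i : ℕ) ≤ (j : ℕ) then 1 else 0 := by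
  have hrev : ((Fin.rev j : Fin m) : ℕ) + (j : ℕ) + 1 = m := by
    have := j.isLt
    simp only [Fin.rev]
    omega
  rw [mul_apply]
  rw [Finset.sum_eq_single (Fin.rev j)]
  · simp only [A, X, Matrix.of_apply]
    rw [if_pos hrev]
    by_cases h : (i : ℕ) ≤ (j : ℕ)
    · rw [if_pos h, if_pos (by omega)]; ring
    · rw [if_neg h, if_neg (by omega)]; ring
  · intro l _ hl
    have : (l : ℕ) + (j : ℕ) + 1 ≠ m := fun h => hl (Fin.ext (by omega))
    simp [X, this]
  · simp

lemma XAbar_apply (m : ℕ) (i j : Fin m) :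
    (X m * Abar m) i j = if (j : ℕ) < (i : ℕ) then 1 else 0 := by
  have hrev : ((Fin.rev i : Fin m) : ℕ) + (i : ℕ) + 1 = m := by
    have := i.isLt
    simp only [Fin.rev]
    omega
  rw [mul_apply]
  rw [Finset.sum_eq_single (Fin.rev i)]
  · simp only [X, Abar, A, Matrix.sub_apply, Matrix.of_apply]
    rw [if_pos (by omega)]
    by_cases h : (j : ℕ) < (i : ℕ)
    · rw [if_pos h, if_pos (by omega), if_neg (by omega)]; ring
    · rw [if_neg h]
      by_cases h2 : ((Fin.rev i : Fin m) : ℕ) + (j : ℕ) + 1 ≤ m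
      · rw [if_pos h2, if_pos (by omega)]; ring
      · rw [if_neg h2, if_neg (by omega)]; ring
  · intro l _ hl
    have : (i : ℕ) + (l : ℕ) + 1 ≠ m := fun h => hl (Fin.ext (by omega))
    simp [X, this]
  · simp

lemma AVU_apply (m : ℕ) (hm : 0 < m) (i j : Fin m) : (A m * VU m) i j = 1 := by
  rw [mul_apply]
  rw [Finset.sum_eq_single (⟨0, hm⟩ : Fin m)]
  · have h0 : ((⟨0, hm⟩ : Fin m) : ℕ) = 0 := rfl
    simp only [A, VU, Matrix.of_apply, h0]
    rw [if_pos (by omega)]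
    norm_num
  · intro l _ hl
    have : (l : ℕ) ≠ 0 := fun h => hl (Fin.ext h)
    simp [VU, this]
  · simp

lemma key (m : ℕ) (hm : 0 < m) : A m * X m + X m * Abar m = A m * VU m := by
  ext i j
  rw [Matrix.add_apply, AX_apply, XAbar_apply, AVU_apply m hm]
  by_cases h : (i : ℕ) ≤ (j : ℕ)
  · rw [if_pos h, if_neg (by omega)]; ring
  · rw [if_neg h, if_pos (by omega)]; ring

/-- For positive integers `m, n, k` with `k + 1 ≤ n`:
`A_m^{n-k} X_m Ā_m^k + A_m^{n-k-1} X_m Ā_m^{k+1} = A_m^{n-k} v_{m,1} u_m^T Ā_m^k`. -/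
theorem A_pow_X_Abar_pow (m n k : ℕ) (hm : 0 < m) (hn : 0 < n) (hk : 0 < k) (hkn : k + 1 ≤ n) :
    A m ^ (n - k) * X m * Abar m ^ k + A m ^ (n - k - 1) * X m * Abar m ^ (k + 1) =
      A m ^ (n - k) * VU m * Abar m ^ k := by
  have h1 : n - k = (n - k - 1) + 1 := by omega
  rw [h1, pow_succ, pow_succ']
  calc A m ^ (n - k - 1) * A m * X m * Abar m ^ k +
      A m ^ (n - k - 1) * X m * (Abar m * Abar m ^ k)
      = A m ^ (n - k - 1) * ((A m * X m + X m * Abar m) * Abar m ^ k) := by noncomm_ring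
    _ = A m ^ (n - k - 1) * A m * VU m * Abar m ^ k := by rw [key m hm]; noncomm_ring
end

section
/- For each positive integer n, det(2x·I_n − T_n) = U_n(x) − U_{n−1}(x), where T_n is the n×n matrix with entries (T_n)_{ij} = [|i−j|=1] + [(i,j)=(1,1)], and U_k denotes the Chebyshev polynomial of the second kind (with U_{−1}=0). -/
open Matrix Polynomial

/-- The `n × n` matrix `T_n` with `(i,j)`-entry `[|i-j| = 1] + [(i,j) = (1,1)]`. -/
def Tmat (n : ℕ) : Matrix (Fin n) (Fin n) ℝ :=
  Matrix.of fun i j =>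
    (if (i : ℕ) + 1 = j ∨ (j : ℕ) + 1 = i then 1 else 0) +
      (if (i : ℕ) = 0 ∧ (j : ℕ) = 0 then 1 else 0)

lemma det_expand_aux (f : ℕ → ℕ → ℝ) (n : ℕ)
    (hr : ∀ j, 2 ≤ j → f 0 j = 0) (hc : ∀ i, 2 ≤ i → f i 0 = 0) :
    (Matrix.of fun i j : Fin (n+2) => f i j).det =
      f 0 0 * (Matrix.of fun i j : Fin (n+1) => f (i+1) (j+1)).det
        - f 0 1 * (f 1 0 * (Matrix.of fun i j : Fin n => f (i+2) (j+2)).det) := by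
  rw [Matrix.det_succ_row_zero, Fin.sum_univ_succ, Fin.sum_univ_succ]
  have hz : ∀ j : Fin n,
      ((-1:ℝ)^((j.succ.succ : Fin (n+2)):ℕ) * (of fun i j : Fin (n+2) => f i j) 0 j.succ.succ *
        ((of fun i j : Fin (n+2) => f i j).submatrix Fin.succ (j.succ.succ).succAbove).det) = 0 := by
    intro j
    simp
    exact Or.inl (hr _ (by omega))
  rw [Finset.sum_congr rfl (fun j _ => hz j), Finset.sum_const_zero]
  have e1 : (of fun i j : Fin (n+2) => f i j).submatrix Fin.succ ((0 : Fin (n+2)).succAbove)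
      = Matrix.of fun i j : Fin (n+1) => f (i+1) (j+1) := by
    ext i j
    simp [Fin.succAbove, Fin.succ]
  rw [e1]
  set N := (of fun i j : Fin (n+2) => f i j).submatrix Fin.succ (((0:Fin (n+1)).succ).succAbove)
    with hN
  have hNdet : N.det = f 1 0 * (Matrix.of fun i j : Fin n => f (i+2) (j+2)).det := by
    rw [Matrix.det_succ_column_zero, Fin.sum_univ_succ]
    have hz2 : ∀ i : Fin n,
        ((-1:ℝ)^((i.succ : Fin (n+1)):ℕ) * N i.succ 0 *
          (N.submatrix (i.succ).succAbove Fin.succ).det) = 0 := by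
      intro i
      have : N i.succ 0 = 0 := by
        simp [hN, Fin.succAbove]
        exact hc _ (by omega)
      simp [this]
    rw [Finset.sum_congr rfl (fun i _ => hz2 i), Finset.sum_const_zero, add_zero]
    have e2 : N.submatrix ((0 : Fin (n+1)).succAbove) Fin.succ
        = Matrix.of fun i j : Fin n => f (i+2) (j+2) := by
      ext i j
      simp [hN, Fin.succAbove, Fin.succ, Fin.lt_def]
    have e3 : N 0 0 = f 1 0 := by
      simp [hN, Fin.succAbove]
    rw [e2, e3]
    simp
  rw [hNdet]
  simp
  ring

/-- Entries of the pure tridiagonal matrix `2xI - A`. -/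
def fA (x : ℝ) (i j : ℕ) : ℝ :=
  if i = j then 2*x else if i+1 = j ∨ j+1 = i then -1 else 0

lemma detA (x : ℝ) : ∀ n : ℕ,
    (Matrix.of fun i j : Fin n => fA x i j).det = (Polynomial.Chebyshev.U ℝ n).eval x
  | 0 => by
    simp [Matrix.det_fin_zero, Polynomial.Chebyshev.U_zero]
  | 1 => by
    rw [Matrix.det_fin_one]
    simp [fA, Polynomial.Chebyshev.U_one]
  | (n+2) => by
    rw [det_expand_aux (fA x) n
      (by intro j hj; simp only [fA]; rw [if_neg (by omega), if_neg (by omega)])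
      (by intro i hi; simp only [fA]; rw [if_neg (by omega), if_neg (by omega)])]
    have h1 : (Matrix.of fun i j : Fin (n+1) => fA x ((i:ℕ)+1) ((j:ℕ)+1))
        = Matrix.of fun i j : Fin (n+1) => fA x i j := by
      ext i j
      simp only [Matrix.of_apply, fA]
      split_ifs <;> simp_all
    have h2 : (Matrix.of fun i j : Fin n => fA x ((i:ℕ)+2) ((j:ℕ)+2))
        = Matrix.of fun i j : Fin n => fA x i j := by
      ext i j
      simp only [Matrix.of_apply, fA]
      split_ifs <;> simp_all
    rw [h1, h2, detA x (n+1), detA x n]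
    have h := Polynomial.Chebyshev.U_add_two ℝ (n:ℤ)
    push_cast
    rw [h]
    simp only [fA, if_pos rfl]
    norm_num

/-- Entries of `2xI - Tmat`. -/
def fB (x : ℝ) (i j : ℕ) : ℝ :=
  (if i = j then 2*x else 0) -
    ((if i+1 = j ∨ j+1 = i then 1 else 0) + (if i = 0 ∧ j = 0 then 1 else 0))

lemma matB (n : ℕ) (x : ℝ) :
    (2*x) • (1 : Matrix (Fin n) (Fin n) ℝ) - Tmat n
      = Matrix.of fun i j : Fin n => fB x i j := by
  ext i j
  simp only [Matrix.sub_apply, Matrix.smul_apply, Matrix.one_apply, Tmat, Matrix.of_apply, fB,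
    smul_eq_mul]
  have : (i = j) ↔ ((i:ℕ) = (j:ℕ)) := Fin.ext_iff
  split_ifs <;> simp_all

/-- For each positive integer `n` and all real `x`:
`det(2x·I_n − T_n) = U_n(x) − U_{n-1}(x)`. -/
theorem det_Tmat_eq_chebyshevU_sub (n : ℕ) (hn : 0 < n) (x : ℝ) :
    ((2 * x) • (1 : Matrix (Fin n) (Fin n) ℝ) - Tmat n).det =
      (Polynomial.Chebyshev.U ℝ n).eval x - (Polynomial.Chebyshev.U ℝ ((n : ℤ) - 1)).eval x := by
  rw [matB]
  match n, hn with
  | 1, _ =>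
    rw [Matrix.det_fin_one]
    simp [fB, Polynomial.Chebyshev.U_one, Polynomial.Chebyshev.U_zero]
  | (m+2), _ =>
    rw [det_expand_aux (fB x) m
      (by intro j hj; simp only [fB]; rw [if_neg (by omega), if_neg (by omega), if_neg (by omega)]; ring
      )
      (by intro i hi; simp only [fB]; rw [if_neg (by omega), if_neg (by omega), if_neg (by omega)]; ring
      )]
    have h1 : (Matrix.of fun i j : Fin (m+1) => fB x ((i:ℕ)+1) ((j:ℕ)+1))
        = Matrix.of fun i j : Fin (m+1) => fA x i j := by
      ext i j
      simp only [Matrix.of_apply, fB, fA]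
      split_ifs <;> simp_all
    have h2 : (Matrix.of fun i j : Fin m => fB x ((i:ℕ)+2) ((j:ℕ)+2))
        = Matrix.of fun i j : Fin m => fA x i j := by
      ext i j
      simp only [Matrix.of_apply, fB, fA]
      split_ifs <;> simp_all
    rw [h1, h2, detA x (m+1), detA x m]
    have h := Polynomial.Chebyshev.U_add_two ℝ (m:ℤ)
    push_cast
    rw [h]
    simp only [fB, if_pos rfl]
    norm_num
    ring
end

section
/- For each positive integer n, det(xI_n − T_n) = Σ_{k=0}^{n} (−1)^{⌊(n+1)/2⌋ + ⌊3k/2⌋ − nk − k} · C(⌊(n+k)/2⌋, k) · x^k, where T_n is the n×n matrix with entries (T_n)_{ij} = [|i−j|=1] + [(i,j)=(1,1)]. -/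
/-!
Reversing the index order moves the corner entry of `T_n` to the bottom right, so expanding
`det (x I - T_n)` along its first row and then along the first column of the surviving minor
gives the three-term recurrence `D (n + 2) = x D (n + 1) - D n`, with `D 0 = 1` and `D 1 = x - 1`.
The explicit coefficients satisfy the same recurrence: up to sign this is Pascal's rule
`C(m + 1, k + 1) = C(m, k) + C(m, k + 1)` with `m = ⌊(n + k + 1)/2⌋`, and the signs work out
by a parity check on the exponent.
-/

open Matrix

open Finset

theorem Matrix.det_succ_succ_of_tridiagonal_head {R : Type*} [CommRing R] {n : ℕ}
    (A : Matrix (Fin (n + 2)) (Fin (n + 2)) R)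
    (hrow : ∀ j : Fin n, A 0 j.succ.succ = 0) (hcol : ∀ i : Fin n, A i.succ.succ 0 = 0) :
    A.det = A 0 0 * (A.submatrix Fin.succ Fin.succ).det -
      A 0 1 * A 1 0 * (A.submatrix (Fin.succ ∘ Fin.succ) (Fin.succ ∘ Fin.succ)).det := by
  have hminor : (A.submatrix Fin.succ (Fin.succAbove 1)).det =
      A 1 0 * (A.submatrix (Fin.succ ∘ Fin.succ) (Fin.succ ∘ Fin.succ)).det := by
    rw [det_succ_column_zero, Fin.sum_univ_succ]
    simp [hcol, Fin.succAbove_zero]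
    rfl
  rw [det_succ_row_zero, Fin.sum_univ_succ, Fin.sum_univ_succ]
  simp [hrow, hminor, Fin.succAbove_zero]
  ring

section CharMatrix

variable (x : ℝ)

noncomputable def charMatrixAt (n : ℕ) : Matrix (Fin n) (Fin n) ℝ :=
  x • (1 : Matrix (Fin n) (Fin n) ℝ) - Tmat n

noncomputable def revCharMatrixAt (n : ℕ) : Matrix (Fin n) (Fin n) ℝ :=
  (charMatrixAt x n).submatrix Fin.rev Fin.rev

theorem det_revCharMatrixAt (n : ℕ) : (revCharMatrixAt x n).det = (charMatrixAt x n).det :=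
  det_submatrix_equiv_self Fin.revPerm _

theorem revCharMatrixAt_apply {n : ℕ} (i j : Fin n) :
    revCharMatrixAt x n i j =
      (if (i : ℕ) = j then x else 0) -
        ((if (i : ℕ) = j + 1 ∨ (j : ℕ) = i + 1 then 1 else 0) +
          (if (i : ℕ) + 1 = n ∧ (j : ℕ) + 1 = n then 1 else 0)) := by
  simp only [revCharMatrixAt, charMatrixAt, Tmat, submatrix_apply,
    Matrix.sub_apply, Matrix.smul_apply, one_apply, of_apply, smul_eq_mul, mul_ite, mul_one,
    mul_zero, ← Fin.val_inj, Fin.val_rev]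
  have := i.isLt
  have := j.isLt
  split_ifs <;> first | rfl | (exfalso; omega)

theorem revCharMatrixAt_submatrix_succ (n : ℕ) :
    (revCharMatrixAt x (n + 1)).submatrix Fin.succ Fin.succ = revCharMatrixAt x n := by
  ext i j
  simp [revCharMatrixAt_apply]

theorem det_charMatrixAt_add_two (n : ℕ) :
    (charMatrixAt x (n + 2)).det = x * (charMatrixAt x (n + 1)).det - (charMatrixAt x n).det := by
  simp only [← det_revCharMatrixAt]
  rw [det_succ_succ_of_tridiagonal_head _ (fun j => ?_) (fun i => ?_), ← submatrix_submatrix,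
    revCharMatrixAt_submatrix_succ, revCharMatrixAt_submatrix_succ]
  all_goals simp [revCharMatrixAt_apply]

end CharMatrix

def signExp (n k : ℕ) : ℤ :=
  (((n + 1) / 2 : ℕ) : ℤ) + ((3 * k / 2 : ℕ) : ℤ) - (n : ℤ) * k - (k : ℤ)

theorem odd_signExp_add_two_sub (n k : ℕ) : Odd (signExp (n + 2) k - signExp n k) := by
  rw [Int.odd_iff, signExp, signExp]
  push_cast
  ring_nf
  omega

theorem even_signExp_add_two_succ_sub (n k : ℕ) :
    Even (signExp (n + 2) (k + 1) - signExp (n + 1) k) := by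
  rw [Int.even_iff, signExp, signExp]
  -- with the parities of `n` and `k` fixed the floor divisions are exact, which `omega` needs here
  obtain ⟨a, rfl | rfl⟩ := Nat.even_or_odd' n <;> obtain ⟨b, rfl | rfl⟩ := Nat.even_or_odd' k <;>
  · push_cast
    ring_nf
    omega

theorem neg_one_zpow_signExp_add_two (n k : ℕ) :
    (-1 : ℝ) ^ signExp (n + 2) k = -(-1 : ℝ) ^ signExp n k := by
  rw [← sub_add_cancel (signExp (n + 2) k) (signExp n k), zpow_add₀ (by norm_num),
    (odd_signExp_add_two_sub n k).neg_one_zpow, neg_one_mul]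

theorem neg_one_zpow_signExp_add_two_succ (n k : ℕ) :
    (-1 : ℝ) ^ signExp (n + 2) (k + 1) = (-1 : ℝ) ^ signExp (n + 1) k := by
  rw [← sub_add_cancel (signExp (n + 2) (k + 1)) (signExp (n + 1) k), zpow_add₀ (by norm_num),
    (even_signExp_add_two_succ_sub n k).neg_one_zpow, one_mul]

noncomputable def pathCoeff (n k : ℕ) : ℝ :=
  (-1 : ℝ) ^ signExp n k * (Nat.choose ((n + k) / 2) k : ℝ)

theorem pathCoeff_eq_zero_of_lt {n k : ℕ} (h : n < k) : pathCoeff n k = 0 := by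
  rw [pathCoeff, Nat.choose_eq_zero_of_lt (by omega), Nat.cast_zero, mul_zero]

theorem pathCoeff_add_two_zero (n : ℕ) : pathCoeff (n + 2) 0 = -pathCoeff n 0 := by
  simp [pathCoeff, neg_one_zpow_signExp_add_two]

theorem pathCoeff_add_two_succ (n k : ℕ) :
    pathCoeff (n + 2) (k + 1) = pathCoeff (n + 1) k - pathCoeff n (k + 1) := by
  have hpascal : (n + 2 + (k + 1)) / 2 = (n + 1 + k) / 2 + 1 := by omega
  have hsame : (n + (k + 1)) / 2 = (n + 1 + k) / 2 := by omega
  have hsign : (-1 : ℝ) ^ signExp n (k + 1) = -(-1 : ℝ) ^ signExp (n + 1) k := by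
    rw [← neg_one_zpow_signExp_add_two_succ, neg_one_zpow_signExp_add_two, neg_neg]
  rw [pathCoeff, pathCoeff, pathCoeff, hpascal, hsame, Nat.choose_succ_succ, Nat.cast_add,
    neg_one_zpow_signExp_add_two_succ, hsign]
  ring

theorem sum_pathCoeff_add_two (x : ℝ) (n : ℕ) :
    ∑ k ∈ range (n + 3), pathCoeff (n + 2) k * x ^ k =
      x * ∑ k ∈ range (n + 2), pathCoeff (n + 1) k * x ^ k -
        ∑ k ∈ range (n + 1), pathCoeff n k * x ^ k := by
  have hextend : ∑ k ∈ range (n + 3), pathCoeff n k * x ^ k =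
      ∑ k ∈ range (n + 1), pathCoeff n k * x ^ k := by
    rw [sum_range_succ, sum_range_succ, pathCoeff_eq_zero_of_lt (by omega : n < n + 2),
      pathCoeff_eq_zero_of_lt (by omega : n < n + 1)]
    ring
  rw [← hextend, sum_range_succ' _ (n + 2), sum_range_succ' (fun k => pathCoeff n k * x ^ k),
    pathCoeff_add_two_zero, mul_sum]
  have hterm (k : ℕ) : pathCoeff (n + 2) (k + 1) * x ^ (k + 1) =
      x * (pathCoeff (n + 1) k * x ^ k) - pathCoeff n (k + 1) * x ^ (k + 1) := by
    rw [pathCoeff_add_two_succ]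
    ring
  simp only [hterm, sum_sub_distrib]
  ring

theorem det_charMatrixAt_eq_sum (x : ℝ) (n : ℕ) :
    (charMatrixAt x n).det = ∑ k ∈ range (n + 1), pathCoeff n k * x ^ k := by
  induction n using Nat.twoStepInduction with
  | zero => simp [pathCoeff, signExp]
  | one => simp [charMatrixAt, Tmat, pathCoeff, signExp, sum_range_succ]; ring
  | more n ih₀ ih₁ => rw [det_charMatrixAt_add_two, ih₀, ih₁, sum_pathCoeff_add_two]

theorem det_Tmat_explicit_general (n : ℕ) (x : ℝ) :
    (x • (1 : Matrix (Fin n) (Fin n) ℝ) - Tmat n).det =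
      ∑ k ∈ Finset.range (n + 1),
        (-1 : ℝ) ^ ((((n + 1) / 2 : ℕ) : ℤ) + ((3 * k / 2 : ℕ) : ℤ) - (n : ℤ) * k - (k : ℤ)) *
          (Nat.choose ((n + k) / 2) k : ℝ) * x ^ k :=
  det_charMatrixAt_eq_sum x n

/-- For each positive integer `n` and all real `x`:
`det(x·I_n − T_n) = ∑_{k=0}^{n} (−1)^{⌊(n+1)/2⌋+⌊3k/2⌋−nk−k} C(⌊(n+k)/2⌋,k) x^k`. -/
theorem det_Tmat_explicit (n : ℕ) (hn : 0 < n) (x : ℝ) :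
    (x • (1 : Matrix (Fin n) (Fin n) ℝ) - Tmat n).det =
      ∑ k ∈ Finset.range (n + 1),
        (-1 : ℝ) ^ ((((n + 1) / 2 : ℕ) : ℤ) + ((3 * k / 2 : ℕ) : ℤ) - (n : ℤ) * k - (k : ℤ)) *
          (Nat.choose ((n + k) / 2) k : ℝ) * x ^ k :=
  det_Tmat_explicit_general n x
end

section
/- For each positive integer n, the n×n matrix T_n with entries (T_n)_{ij} = [|i−j|=1] + [(i,j)=(1,1)] has the n distinct eigenvalues 2cos((2j−1)π/(2n+1)) for j = 1, …, n. -/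
open Matrix Real

private noncomputable def wfun (θ : ℝ) (m : ℕ) : ℝ := Real.cos ((2 * m + 1) * θ / 2)

private lemma wfun_rec (θ : ℝ) (m : ℕ) :
    wfun θ (m + 2) + wfun θ m = 2 * Real.cos θ * wfun θ (m + 1) := by
  unfold wfun
  push_cast
  have h1 : (2 * ((m : ℝ) + 2) + 1) * θ / 2 = (2 * (m : ℝ) + 3) * θ / 2 + θ := by ring
  have h2 : (2 * (m : ℝ) + 1) * θ / 2 = (2 * (m : ℝ) + 3) * θ / 2 - θ := by ring
  have h3 : (2 * ((m : ℝ) + 1) + 1) * θ / 2 = (2 * (m : ℝ) + 3) * θ / 2 := by ring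
  rw [h1, h2, h3, Real.cos_add, Real.cos_sub]
  ring

private lemma wfun_base (θ : ℝ) :
    wfun θ 1 + wfun θ 0 = 2 * Real.cos θ * wfun θ 0 := by
  unfold wfun
  push_cast
  have h1 : (2 * (1 : ℝ) + 1) * θ / 2 = θ / 2 + θ := by ring
  have h2 : (2 * (0 : ℝ) + 1) * θ / 2 = θ / 2 := by ring
  have h4 := congrArg Real.cos (show θ / 2 - θ = -(θ / 2) by ring)
  rw [Real.cos_neg] at h4
  have h5 : Real.cos (θ / 2 + θ) + Real.cos (θ / 2 - θ) = 2 * Real.cos (θ / 2) * Real.cos θ := by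
    rw [Real.cos_add, Real.cos_sub]; ring
  rw [h1, h2]
  rw [h4] at h5
  linarith

private lemma sum_ite_nat {n : ℕ} (m : ℕ) (v : Fin n → ℝ) :
    (∑ k : Fin n, if m = (k : ℕ) then v k else 0) =
      if h : m < n then v ⟨m, h⟩ else 0 := by
  split_ifs with h
  · rw [Finset.sum_eq_single (⟨m, h⟩ : Fin n)]
    · simp
    · intro k _ hk
      exact if_neg fun hm => hk (Fin.ext hm.symm)
    · simp
  · refine Finset.sum_eq_zero fun k _ => if_neg fun hm => h (by rw [hm]; exact k.isLt)

private lemma mulVec_Tmat (n : ℕ) (hn : 0 < n) (θ : ℝ) (hwn : wfun θ n = 0) :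
    (Tmat n) *ᵥ (fun i : Fin n => wfun θ i) =
      (2 * Real.cos θ) • (fun i : Fin n => wfun θ i) := by
  funext i
  have hsplit : ∀ k : Fin n, Tmat n i k * wfun θ (k : ℕ) =
      (if (i : ℕ) + 1 = (k : ℕ) then wfun θ (k : ℕ) else 0) +
        ((if (k : ℕ) + 1 = (i : ℕ) then wfun θ (k : ℕ) else 0) +
          (if (i : ℕ) = 0 ∧ (k : ℕ) = 0 then wfun θ (k : ℕ) else 0)) := by
    intro k
    simp only [Tmat, Matrix.of_apply]
    split_ifs <;> first | ring1 | (exfalso; omega)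
  have hmv : ((Tmat n) *ᵥ (fun i : Fin n => wfun θ i)) i
      = ∑ k : Fin n, Tmat n i k * wfun θ (k : ℕ) := rfl
  rw [hmv, Finset.sum_congr rfl fun k _ => hsplit k, Finset.sum_add_distrib,
    Finset.sum_add_distrib]
  have h1 : (∑ k : Fin n, if (i : ℕ) + 1 = (k : ℕ) then wfun θ (k : ℕ) else 0)
      = wfun θ ((i : ℕ) + 1) := by
    rw [sum_ite_nat ((i : ℕ) + 1) (fun k : Fin n => wfun θ (k : ℕ))]
    split_ifs with h
    · rfl
    · have hni : (i : ℕ) + 1 = n := by have := i.isLt; omega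
      rw [hni, hwn]
  have h2 : (∑ k : Fin n, if (k : ℕ) + 1 = (i : ℕ) then wfun θ (k : ℕ) else 0)
      = if (i : ℕ) = 0 then 0 else wfun θ ((i : ℕ) - 1) := by
    split_ifs with h0
    · exact Finset.sum_eq_zero fun k _ => if_neg (by omega)
    · have hc : ∀ k : Fin n, ((k : ℕ) + 1 = (i : ℕ)) = ((i : ℕ) - 1 = (k : ℕ)) :=
        fun k => propext ⟨fun h => by omega, fun h => by omega⟩
      have hsum : (∑ k : Fin n, if (k : ℕ) + 1 = (i : ℕ) then wfun θ (k : ℕ) else 0)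
          = ∑ k : Fin n, if (i : ℕ) - 1 = (k : ℕ) then wfun θ (k : ℕ) else 0 :=
        Finset.sum_congr rfl fun k _ => by simp only [hc k]
      rw [hsum, sum_ite_nat ((i : ℕ) - 1) (fun k : Fin n => wfun θ (k : ℕ)),
        dif_pos (by have := i.isLt; omega : (i : ℕ) - 1 < n)]
  have h3 : (∑ k : Fin n, if (i : ℕ) = 0 ∧ (k : ℕ) = 0 then wfun θ (k : ℕ) else 0)
      = if (i : ℕ) = 0 then wfun θ 0 else 0 := by
    split_ifs with h0
    · rw [Finset.sum_eq_single (⟨0, hn⟩ : Fin n)]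
      · simp [h0]
      · intro k _ hk
        refine if_neg fun hm => hk (Fin.ext ?_)
        simpa using hm.2
      · simp
    · exact Finset.sum_eq_zero fun k _ => if_neg fun hm => h0 hm.1
  rw [h1, h2, h3]
  show _ = (2 * Real.cos θ) * wfun θ (i : ℕ)
  rcases Nat.eq_zero_or_pos (i : ℕ) with h0 | h0
  · rw [h0]
    simp only [if_pos rfl]
    have hb := wfun_base θ
    norm_num
    linarith
  · obtain ⟨m, him⟩ : ∃ m, (i : ℕ) = m + 1 := ⟨(i : ℕ) - 1, by omega⟩
    rw [him]
    simp only [Nat.succ_ne_zero, if_neg, Nat.add_sub_cancel, if_false]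
    have hr := wfun_rec θ m
    have : m + 1 + 1 = m + 2 := rfl
    rw [this]
    linarith

/-- For each positive integer `n`, the matrix `T_n` has exactly the `n` distinct eigenvalues
`2cos((2j−1)π/(2n+1))`, `j = 1, …, n`. -/
theorem Tmat_eigenvalues (n : ℕ) (hn : 0 < n) :
    Function.Injective
        (fun j : Fin n => 2 * Real.cos ((2 * (j : ℕ) + 1) * Real.pi / (2 * n + 1))) ∧
      spectrum ℝ (Tmat n) =
        Set.range (fun j : Fin n => 2 * Real.cos ((2 * (j : ℕ) + 1) * Real.pi / (2 * n + 1))) := by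
  have hπ := Real.pi_pos
  set Λ : Fin n → ℝ := fun j => 2 * Real.cos ((2 * (j : ℕ) + 1) * Real.pi / (2 * n + 1)) with hΛ
  set Θ : Fin n → ℝ := fun j => (2 * (j : ℕ) + 1) * Real.pi / (2 * n + 1) with hΘ
  have hden : (0 : ℝ) < 2 * n + 1 := by positivity
  have hjn : ∀ j : Fin n, (j : ℝ) < n := fun j => by exact_mod_cast j.isLt
  have hθ0 : ∀ j : Fin n, 0 < Θ j := fun j => by
    apply div_pos _ hden
    positivity
  have hθπ : ∀ j : Fin n, Θ j < Real.pi := fun j => by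
    rw [hΘ, div_lt_iff₀ hden]
    nlinarith [hjn j]
  -- Injectivity
  have hinj : Function.Injective Λ := by
    intro a b hab
    have hcos : Real.cos (Θ a) = Real.cos (Θ b) := by
      have : 2 * Real.cos (Θ a) = 2 * Real.cos (Θ b) := hab
      linarith
    have hθab : Θ a = Θ b :=
      Real.injOn_cos ⟨(hθ0 a).le, (hθπ a).le⟩ ⟨(hθ0 b).le, (hθπ b).le⟩ hcos
    rw [hΘ] at hθab
    simp only [div_eq_div_iff hden.ne' hden.ne'] at hθab
    have hπ' : Real.pi ≠ 0 := ne_of_gt hπ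
    have h1 := mul_right_cancel₀ hden.ne' hθab
    have h2 := mul_right_cancel₀ hπ' h1
    have : (a : ℝ) = b := by linarith
    have : (a : ℕ) = b := by exact_mod_cast this
    exact Fin.ext this
  refine ⟨hinj, ?_⟩
  -- the endomorphism
  set f : Module.End ℝ (Fin n → ℝ) := Matrix.toLinAlgEquiv' (Tmat n) with hf
  have hspec : spectrum ℝ (Tmat n) = spectrum ℝ f :=
    (AlgEquiv.spectrum_eq Matrix.toLinAlgEquiv' (Tmat n)).symm
  -- eigenvectors
  have hwn : ∀ j : Fin n, wfun (Θ j) n = 0 := by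
    intro j
    have harg : (2 * (n : ℝ) + 1) * Θ j / 2 = (j : ℕ) * Real.pi + Real.pi / 2 := by
      rw [hΘ]
      field_simp
    unfold wfun
    rw [harg, Real.cos_add, Real.cos_pi_div_two, Real.sin_pi_div_two, Real.sin_nat_mul_pi]
    ring
  have hvec : ∀ j : Fin n,
      f.HasEigenvector (Λ j) (fun i : Fin n => wfun (Θ j) (i : ℕ)) := by
    intro j
    constructor
    · rw [Module.End.mem_eigenspace_iff]
      have := mulVec_Tmat n hn (Θ j) (hwn j)
      simpa [hf, Matrix.toLinAlgEquiv'_apply, hΛ, hΘ] using this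
    · intro hz
      have h0 : wfun (Θ j) ((⟨0, hn⟩ : Fin n) : ℕ) = 0 := congrFun hz ⟨0, hn⟩
      have : Real.cos (Θ j / 2) = 0 := by
        have e : (2 * ((0 : ℕ) : ℝ) + 1) * Θ j / 2 = Θ j / 2 := by norm_num
        unfold wfun at h0
        rwa [show (((⟨0, hn⟩ : Fin n) : ℕ) : ℝ) = ((0 : ℕ) : ℝ) by norm_num, e] at h0
      have hpos : 0 < Real.cos (Θ j / 2) := by
        apply Real.cos_pos_of_mem_Ioo
        constructor
        · nlinarith [hθ0 j]
        · nlinarith [hθπ j]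
      linarith
  have heig : ∀ μ : ℝ, μ ∈ spectrum ℝ (Tmat n) ↔ f.HasEigenvalue μ := by
    intro μ
    rw [hspec, Module.End.hasEigenvalue_iff_mem_spectrum]
  apply Set.eq_of_subset_of_subset
  · intro μ hμ
    by_contra hnr
    obtain ⟨u, hu⟩ := ((heig μ).mp hμ).exists_hasEigenvector
    set g : Option (Fin n) → ℝ := fun o => o.elim μ Λ with hg
    set vv : Option (Fin n) → (Fin n → ℝ) :=
      fun o => o.elim u (fun j => fun i : Fin n => wfun (Θ j) (i : ℕ)) with hvv
    have hginj : Function.Injective g := by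
      intro a b hab
      match a, b with
      | none, none => rfl
      | none, some j => exact absurd ⟨j, hab.symm⟩ hnr
      | some j, none => exact absurd ⟨j, hab⟩ hnr
      | some j, some k => exact congrArg some (hinj hab)
    have hli : LinearIndependent ℝ vv :=
      f.eigenvectors_linearIndependent' g hginj vv (by
        rintro (_ | j)
        · exact hu
        · exact hvec j)
    have hcard := hli.fintype_card_le_finrank
    simp [Module.finrank_fintype_fun_eq_card] at hcard
  · rintro μ ⟨j, rfl⟩
    exact (heig (Λ j)).mpr (Module.End.hasEigenvalue_of_hasEigenvector (hvec j))
end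

section
/- For each positive integer n, the polynomials P_n(x) = Σ_{k=0}^{n} (−1)^{⌊3k/2⌋} C(⌊(n+k)/2⌋,k) x^k satisfy the recursion P_{n+1}(x) = −x·P_n(−x) + P_{n−1}(x). -/
/-- `P_n(x) = ∑_{k=0}^{n} (−1)^{⌊3k/2⌋} C(⌊(n+k)/2⌋,k) x^k`. -/
def P (n : ℕ) (x : ℝ) : ℝ :=
  ∑ k ∈ Finset.range (n + 1),
    (-1 : ℝ) ^ (3 * k / 2) * (Nat.choose ((n + k) / 2) k : ℝ) * x ^ k

lemma sign_step (j : ℕ) :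
    ((-1 : ℝ)) ^ (3 * (j + 1) / 2) = (-1) ^ (3 * j / 2) * (-1) ^ j * (-1) := by
  rcases Nat.even_or_odd j with ⟨m, rfl⟩ | ⟨m, rfl⟩
  · have h1 : 3 * (m + m + 1) / 2 = 3 * m + 1 := by omega
    have h2 : 3 * (m + m) / 2 = 3 * m := by omega
    rw [h1, h2]
    have : ((-1 : ℝ)) ^ (m + m) = 1 := by
      rw [← two_mul]; simp [pow_mul]
    rw [this, pow_succ]; ring
  · have h1 : 3 * (2 * m + 1 + 1) / 2 = 3 * m + 3 := by omega
    have h2 : 3 * (2 * m + 1) / 2 = 3 * m + 1 := by omega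
    rw [h1, h2]
    have : ((-1 : ℝ)) ^ (2 * m + 1) = -1 := by
      simp [pow_succ, pow_mul]
    rw [this]; ring

/-- For each positive integer `n` and all real `x`:
`P_{n+1}(x) = −x·P_n(−x) + P_{n−1}(x)`. -/
theorem P_recursion (n : ℕ) (hn : 0 < n) (x : ℝ) :
    P (n + 1) x = -x * P n (-x) + P (n - 1) x := by
  -- f k : the k-th coefficient-term of -x * P n (-x) after reindexing
  set f : ℕ → ℝ := fun k =>
    (-1 : ℝ) ^ (3 * k / 2) * (Nat.choose ((n + k - 1) / 2) (k - 1) : ℝ) * x ^ k with hf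
  have hxP : -x * P n (-x) = (∑ k ∈ Finset.range (n + 2), f k) - 1 := by
    have h1 : -x * P n (-x) = ∑ j ∈ Finset.range (n + 1), f (j + 1) := by
      unfold P
      rw [Finset.mul_sum]
      refine Finset.sum_congr rfl fun j _ => ?_
      have hs := sign_step j
      have hidx : (n + (j + 1) - 1) / 2 = (n + j) / 2 := by omega
      have hsub : (j + 1) - 1 = j := by omega
      rw [hf]
      simp only [hidx, hsub, hs]
      rw [neg_pow]
      ring
    have h2 := Finset.sum_range_succ' f (n + 1)
    have hf0 : f 0 = 1 := by simp [hf]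
    rw [h1, h2, hf0]
    ring
  have hP1 : P (n - 1) x = ∑ k ∈ Finset.range (n + 2),
      (-1 : ℝ) ^ (3 * k / 2) * (Nat.choose ((n - 1 + k) / 2) k : ℝ) * x ^ k := by
    unfold P
    have hn1 : n - 1 + 1 = n := by omega
    rw [hn1]
    rw [Finset.sum_range_succ, Finset.sum_range_succ]
    have hz1 : Nat.choose ((n - 1 + n) / 2) n = 0 := by
      apply Nat.choose_eq_zero_of_lt; omega
    have hz2 : Nat.choose ((n - 1 + (n + 1)) / 2) (n + 1) = 0 := by
      apply Nat.choose_eq_zero_of_lt; omega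
    rw [hz1, hz2]
    push_cast
    ring
  rw [hxP, hP1]
  unfold P
  have key : ∀ k ∈ Finset.range (n + 2),
      ((-1 : ℝ) ^ (3 * k / 2) * (Nat.choose ((n + 1 + k) / 2) k : ℝ) * x ^ k)
      - (f k + (-1 : ℝ) ^ (3 * k / 2) * (Nat.choose ((n - 1 + k) / 2) k : ℝ) * x ^ k)
      = if k = 0 then -1 else 0 := by
    intro k _
    rcases k with _ | j
    · simp [hf]
    · simp only [Nat.succ_ne_zero, if_false, hf]
      have hsub : (j + 1) - 1 = j := by omega
      have hidx1 : (n + 1 + (j + 1)) / 2 = (n + j) / 2 + 1 := by omega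
      have hidx2 : (n + (j + 1) - 1) / 2 = (n + j) / 2 := by omega
      have hidx3 : (n - 1 + (j + 1)) / 2 = (n + j) / 2 := by omega
      rw [hsub, hidx1, hidx2, hidx3, Nat.choose_succ_succ]
      push_cast
      ring
  have hsum : (∑ k ∈ Finset.range (n + 2),
      ((-1 : ℝ) ^ (3 * k / 2) * (Nat.choose ((n + 1 + k) / 2) k : ℝ) * x ^ k))
      - (∑ k ∈ Finset.range (n + 2),
        (f k + (-1 : ℝ) ^ (3 * k / 2) * (Nat.choose ((n - 1 + k) / 2) k : ℝ) * x ^ k))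
      = -1 := by
    rw [← Finset.sum_sub_distrib, Finset.sum_congr rfl key]
    rw [Finset.sum_ite_eq' (Finset.range (n + 2)) 0 (fun _ => (-1 : ℝ))]
    simp
  rw [Finset.sum_add_distrib] at hsum
  linarith [hsum]
end

section
/- For each positive integer n, the spectral radius of the n×n unit-primitive matrix A_n equals 1/(2·sin(π/(2(2n+1)))); that is, the maximum of |(−1)^{n+1}/(2cos((2j−1)π/(2n+1)))| over j = 1,…,n is attained at j = ⌊n/2⌋+1 and equals 1/(2 sin(π/(2(2n+1)))). -/
open Matrix Real

lemma sin_le_abs_sin {δ y : ℝ} (hδ : 0 ≤ δ) (h1 : δ ≤ |y|) (h2 : |y| ≤ Real.pi / 2) :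
    Real.sin δ ≤ |Real.sin y| := by
  have hpi := Real.pi_pos
  obtain ⟨hl, hr⟩ := abs_le.mp h2
  have habs : |Real.sin y| = Real.sin |y| := by
    rcases le_or_gt 0 y with hy | hy
    · rw [abs_of_nonneg hy,
        abs_of_nonneg (Real.sin_nonneg_of_nonneg_of_le_pi hy (by linarith))]
    · rw [abs_of_neg hy, Real.sin_neg,
        abs_of_nonpos (Real.sin_nonpos_of_nonpos_of_neg_pi_le (le_of_lt hy) (by linarith))]
  rw [habs]
  exact Real.strictMonoOn_sin.monotoneOn ⟨by linarith, by linarith⟩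
    ⟨by linarith, h2⟩ h1

/-- For each positive integer `n`, among the eigenvalues
`λ_{n,j} = (−1)^{n+1}/(2cos((2j−1)π/(2n+1)))`, `j = 1, …, n`, of the `n × n` unit-primitive
matrix, the maximal absolute value (the spectral radius) is attained at `j = ⌊n/2⌋ + 1`
and equals `1/(2 sin(π/(2(2n+1))))`. -/
theorem spectral_radius_unit_primitive (n : ℕ) (hn : 0 < n) :
    (∀ j : Fin n,
        |(-1 : ℝ) ^ (n + 1) / (2 * Real.cos ((2 * (j : ℕ) + 1) * Real.pi / (2 * n + 1)))| ≤
          1 / (2 * Real.sin (Real.pi / (2 * (2 * n + 1))))) ∧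
      (-1 : ℝ) ^ (n + 1) /
          (2 * Real.cos ((2 * ((n / 2 : ℕ) : ℝ) + 1) * Real.pi / (2 * n + 1))) =
        1 / (2 * Real.sin (Real.pi / (2 * (2 * n + 1)))) := by
  have hpi := Real.pi_pos
  have hN : (0:ℝ) < 2 * n + 1 := by positivity
  have hδpos : 0 < Real.pi / (2 * (2 * n + 1)) := by positivity
  have hδlt : Real.pi / (2 * (2 * n + 1)) < Real.pi := by
    have h1n : (1:ℝ) ≤ n := by exact_mod_cast hn
    rw [div_lt_iff₀ (by positivity)]
    nlinarith
  have hsδ : 0 < Real.sin (Real.pi / (2 * (2 * n + 1))) :=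
    Real.sin_pos_of_pos_of_lt_pi hδpos hδlt
  constructor
  · intro j
    have hj : (j : ℕ) < n := j.2
    have hjR : ((j : ℕ) : ℝ) ≤ n - 1 := by
      have : ((j : ℕ) : ℝ) + 1 ≤ n := by exact_mod_cast hj
      linarith
    set y : ℝ := (4 * (j : ℕ) + 1 - 2 * n) * Real.pi / (2 * (2 * n + 1)) with hy
    have hang : (2 * ((j:ℕ):ℝ) + 1) * Real.pi / (2 * n + 1) = Real.pi / 2 - (-y) := by
      rw [hy]; field_simp; ring
    have hcos : Real.cos ((2 * ((j:ℕ):ℝ) + 1) * Real.pi / (2 * n + 1)) = -Real.sin y := by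
      rw [hang, Real.cos_pi_div_two_sub, Real.sin_neg]
    -- bound on |y|
    have hk1 : (1:ℝ) ≤ |4 * ((j:ℕ):ℝ) + 1 - 2 * n| := by
      have hz : (4 * ((j:ℕ):ℤ) + 1 - 2 * n) ≠ 0 := by omega
      have : (1:ℤ) ≤ |4 * ((j:ℕ):ℤ) + 1 - 2 * n| := Int.one_le_abs hz
      calc (1:ℝ) ≤ ((|4 * ((j:ℕ):ℤ) + 1 - 2 * n| : ℤ) : ℝ) := by exact_mod_cast this
        _ = |4 * ((j:ℕ):ℝ) + 1 - 2 * n| := by push_cast [Int.cast_abs]; ring_nf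
    have hk2 : |4 * ((j:ℕ):ℝ) + 1 - 2 * n| ≤ 2 * n + 1 := by
      rw [abs_le]; constructor <;> [nlinarith; nlinarith]
    have hyabs : |y| = |4 * ((j:ℕ):ℝ) + 1 - 2 * n| * (Real.pi / (2 * (2 * n + 1))) := by
      rw [hy, abs_div, abs_mul, abs_of_pos hpi, abs_of_pos (by positivity : (0:ℝ) < 2 * (2*(n:ℝ)+1))]
      ring
    have h1 : Real.pi / (2 * (2 * n + 1)) ≤ |y| := by
      rw [hyabs]; nlinarith
    have h2 : |y| ≤ Real.pi / 2 := by
      rw [hyabs]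
      have hhalf : Real.pi / 2 = (2 * (n:ℝ) + 1) * (Real.pi / (2 * (2 * n + 1))) := by
        field_simp
      rw [hhalf]
      nlinarith
    have key : Real.sin (Real.pi / (2 * (2 * n + 1))) ≤ |Real.sin y| :=
      sin_le_abs_sin hδpos.le h1 h2
    rw [hcos]
    rw [abs_div, abs_pow, abs_neg, abs_one, one_pow, abs_mul, abs_two, abs_neg]
    apply one_div_le_one_div_of_le (by positivity)
    nlinarith
  · rcases Nat.even_or_odd n with ⟨m, hm⟩ | ⟨m, hm⟩
    · -- n = 2m, n/2 = m, angle = π/2 + δ, cos = -sin δ, sign = -1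
      have hm' : n / 2 = m := by omega
      have hnR : (n:ℝ) = 2 * m := by exact_mod_cast (by omega : n = 2 * m)
      have hang : (2 * ((m:ℕ):ℝ) + 1) * Real.pi / (2 * n + 1)
          = Real.pi / 2 - (-(Real.pi / (2 * (2 * n + 1)))) := by
        rw [hnR]; field_simp; ring
      have hsign : (-1 : ℝ) ^ (n + 1) = -1 := by
        rw [(by omega : n + 1 = 2 * m + 1), pow_succ, pow_mul]; norm_num
      rw [hm', hang, Real.cos_pi_div_two_sub, Real.sin_neg, hsign]
      field_simp
    · -- n = 2m+1, n/2 = m, angle = π/2 - δ, cos = sin δ, sign = 1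
      have hm' : n / 2 = m := by omega
      have hnR : (n:ℝ) = 2 * m + 1 := by exact_mod_cast hm
      have hang : (2 * ((m:ℕ):ℝ) + 1) * Real.pi / (2 * n + 1)
          = Real.pi / 2 - Real.pi / (2 * (2 * n + 1)) := by
        rw [hnR]; field_simp; ring
      have hsign : (-1 : ℝ) ^ (n + 1) = 1 := by
        rw [(by omega : n + 1 = 2 * (m + 1)), pow_mul]; norm_num
      rw [hm', hang, Real.cos_pi_div_two_sub, hsign]
end
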